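/- arXiv:1903.07459 — 5 statements merged into one kernel-verified Lean document; each statement's English description precedes it below -/
import Mathlib

section
/- The linear code C̄₁ contains exactly p^{3m+1} codewords; equivalently, the F_p-linear parametrization map sending (a, b, c, h) ∈ F_q × F_q × F_q × F_p to the word (Tr(a·x^{p^l+1} + b·x² + c·x) + h)_{x ∈ F_q} is injective, so C̄₁ has dimension 3m+1 over F_p. -/
/-! If `Q(x) = Tr(a x^(p^l+1) + b x² + c x)` vanishes identically, so does its polarization
`Q(x+y) - Q(x) - Q(y) = Tr(a x^(p^l) y + a x y^(p^l) + 2bxy)`. Moving the Frobenius off `y`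
(`Tr(z^p) = Tr z`) turns this into `Tr(L(x) y) = 0` with the linearized polynomial
`L(x) = a x^(p^i) + a^(p^(m-i)) x^(p^(m-i)) + 2bx`, `i = l mod m`, so `L` vanishes on `F_q` by
nondegeneracy of the trace form. As `gcd(m, l) = 1` and `m ≥ 3`, the exponents `p^i`, `p^(m-i)`
and `1` are distinct and less than `q`, hence `a = b = 0`; then `Tr(cx) = 0` for all `x` forces
`c = 0`, and `x = 0` gives `h = 0`. -/

open Polynomial

def codeC1 (p l : ℕ) (F : Type) [Field F] [Fintype F] [Algebra (ZMod p) F] :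
    Set (F → ZMod p) :=
  {w | ∃ a b c : F, ∃ h : ZMod p, ∀ x : F,
    w x = Algebra.trace (ZMod p) F (a * x ^ (p ^ l + 1) + b * x ^ 2 + c * x) + h}

theorem Algebra.trace_pow_card_pow {K L : Type*} [Field K] [Fintype K] [Field L] [Algebra K L]
    [Algebra.IsAlgebraic K L] (n : ℕ) (x : L) :
    Algebra.trace K L (x ^ Fintype.card K ^ n) = Algebra.trace K L x := by
  have := Algebra.trace_eq_of_algEquiv (FiniteField.frobeniusAlgEquivOfAlgebraic K L ^ n) x
  rwa [AlgEquiv.coe_pow, FiniteField.coe_frobeniusAlgEquivOfAlgebraic_iterate] at this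

theorem FiniteField.pow_pow_mod {F : Type*} [Field F] [Fintype F] {p m : ℕ}
    (hF : Fintype.card F = p ^ m) (x : F) (l : ℕ) : x ^ p ^ l = x ^ p ^ (l % m) := by
  conv_lhs => rw [← Nat.mod_add_div l m, pow_add, pow_mul, pow_mul, ← hF,
    FiniteField.pow_card_pow]

theorem FiniteField.eq_zero_of_forall_eval_trinomial {F : Type*} [Field F] [Fintype F]
    {i j k : ℕ} (hij : i ≠ j) (hik : i ≠ k) (hjk : j ≠ k) (hi : i < Fintype.card F)
    (hj : j < Fintype.card F) (hk : k < Fintype.card F) {a b c : F}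
    (h : ∀ x : F, a * x ^ i + b * x ^ j + c * x ^ k = 0) : a = 0 ∧ b = 0 ∧ c = 0 := by
  set P : F[X] := monomial i a + monomial j b + monomial k c
  have hdeg : P.natDegree < Fintype.card F :=
    ((natDegree_add_le _ _).trans (max_le_max ((natDegree_add_le _ _).trans
      (max_le_max (natDegree_monomial_le a) (natDegree_monomial_le b)))
      (natDegree_monomial_le c))).trans_lt (max_lt (max_lt hi hj) hk)
  have hP : P = 0 := eq_zero_of_natDegree_lt_card_of_eval_eq_zero P Function.injective_id
    (fun x => by simpa [P] using h x) hdeg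
  have hcoeff (n : ℕ) := congrArg (coeff · n) hP
  simp only [P, coeff_add, coeff_monomial, coeff_zero] at hcoeff
  refine ⟨?_, ?_, ?_⟩
  · simpa [hij.symm, hik.symm] using hcoeff i
  · simpa [hij, hjk.symm] using hcoeff j
  · simpa [hik, hjk] using hcoeff k

theorem Nat.mod_pos_and_mod_ne_sub_mod {m l : ℕ} (hm : 3 ≤ m) (hml : Nat.gcd m l = 1) :
    0 < l % m ∧ l % m ≠ m - l % m := by
  have hgcd : Nat.gcd (l % m) m = 1 := by rwa [← Nat.gcd_rec]
  refine ⟨Nat.pos_of_ne_zero fun h => ?_, fun h => ?_⟩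
  · simp only [h, Nat.gcd_zero_left] at hgcd
    omega
  · have : Nat.gcd (l % m) m = l % m := Nat.gcd_eq_left ⟨2, by omega⟩
    omega

section Trace

variable {p : ℕ} [Fact p.Prime] {F : Type*} [Field F] [Fintype F] [Algebra (ZMod p) F]

theorem trace_pow_prime_pow (n : ℕ) (x : F) :
    Algebra.trace (ZMod p) F (x ^ p ^ n) = Algebra.trace (ZMod p) F x := by
  simpa using Algebra.trace_pow_card_pow (K := ZMod p) n x

theorem trace_mul_pow_prime_pow {m i k : ℕ} (hF : Fintype.card F = p ^ m) (hik : i + k = m)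
    (z y : F) :
    Algebra.trace (ZMod p) F (z * y ^ p ^ i) = Algebra.trace (ZMod p) F (z ^ p ^ k * y) := by
  rw [← trace_pow_prime_pow k, mul_pow, ← pow_mul, ← pow_add, hik, ← hF,
    FiniteField.pow_card]

theorem linearized_eq_zero_of_forall_trace_eq_zero {m i k : ℕ} (hF : Fintype.card F = p ^ m)
    (hik : i + k = m) {a b c : F}
    (H : ∀ x : F, Algebra.trace (ZMod p) F (a * x ^ (p ^ i + 1) + b * x ^ 2 + c * x) = 0)
    (x : F) : a * x ^ p ^ i + a ^ p ^ k * x ^ p ^ k + 2 * b * x = 0 := by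
  have : CharP F p := charP_of_injective_algebraMap' (ZMod p) p
  refine (traceForm_nondegenerate (ZMod p) F).1 _ fun y => ?_
  let Q : F → F := fun x => a * x ^ (p ^ i + 1) + b * x ^ 2 + c * x
  have hpolar : Q (x + y) - Q x - Q y = a * x ^ p ^ i * y + a * x * y ^ p ^ i + 2 * b * x * y := by
    simp only [Q, pow_succ _ (p ^ i), add_pow_char_pow]
    ring
  rw [Algebra.traceForm_apply]
  calc Algebra.trace (ZMod p) F ((a * x ^ p ^ i + a ^ p ^ k * x ^ p ^ k + 2 * b * x) * y)
      = Algebra.trace (ZMod p) F (a * x ^ p ^ i * y) +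
          Algebra.trace (ZMod p) F ((a * x) ^ p ^ k * y) +
          Algebra.trace (ZMod p) F (2 * b * x * y) := by
        rw [← map_add, ← map_add]; congr 1; ring
    _ = Algebra.trace (ZMod p) F (Q (x + y) - Q x - Q y) := by
        rw [← trace_mul_pow_prime_pow hF hik, ← map_add, ← map_add, hpolar]
    _ = 0 := by simp only [map_sub, Q, H, sub_zero]

theorem eq_zero_of_forall_trace_eq_zero {m l : ℕ} (hp : p ≠ 2) (hm : 3 ≤ m)
    (hml : Nat.gcd m l = 1) (hF : Fintype.card F = p ^ m) {a b c : F}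
    (H : ∀ x : F, Algebra.trace (ZMod p) F (a * x ^ (p ^ l + 1) + b * x ^ 2 + c * x) = 0) :
    a = 0 ∧ b = 0 ∧ c = 0 := by
  have : CharP F p := charP_of_injective_algebraMap' (ZMod p) p
  have hp1 : 1 < p := (Fact.out : p.Prime).one_lt
  obtain ⟨hi, hne⟩ := Nat.mod_pos_and_mod_ne_sub_mod hm hml
  set i := l % m
  have him : i < m := Nat.mod_lt l (by omega)
  have hlin := linearized_eq_zero_of_forall_trace_eq_zero hF (Nat.add_sub_of_le him.le)
    (fun x => by rw [pow_succ, ← FiniteField.pow_pow_mod hF, ← pow_succ]; exact H x)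
  obtain ⟨ha, -, h2b⟩ := FiniteField.eq_zero_of_forall_eval_trinomial (i := p ^ i)
    (j := p ^ (m - i)) (k := 1)
    (fun h => hne (Nat.pow_right_injective hp1 h)) (Nat.one_lt_pow hi.ne' hp1).ne'
    (Nat.one_lt_pow (by omega) hp1).ne' (hF ▸ Nat.pow_lt_pow_right hp1 him)
    (hF ▸ Nat.pow_lt_pow_right hp1 (by omega)) (hF ▸ Nat.one_lt_pow (by omega) hp1)
    (fun x => by rw [pow_one]; exact hlin x)
  have hb : b = 0 :=
    (mul_eq_zero.mp h2b).resolve_left (Ring.two_ne_zero (by rwa [ringChar.eq F p]))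
  refine ⟨ha, hb, (traceForm_nondegenerate (ZMod p) F).1 c fun y => ?_⟩
  simpa [ha, hb, mul_comm] using H y

end Trace

noncomputable def codeC1Map (p l : ℕ) (F : Type) [Field F] [Fintype F] [Algebra (ZMod p) F] :
    F × F × F × ZMod p →+ (F → ZMod p) where
  toFun t x := Algebra.trace (ZMod p) F (t.1 * x ^ (p ^ l + 1) + t.2.1 * x ^ 2 + t.2.2.1 * x)
    + t.2.2.2
  map_zero' := by ext; simp
  map_add' s t := by
    ext x
    simp only [Prod.fst_add, Prod.snd_add, Pi.add_apply, add_mul, map_add]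
    ring

theorem codeC1_eq_range (p l : ℕ) (F : Type) [Field F] [Fintype F] [Algebra (ZMod p) F] :
    codeC1 p l F = Set.range (codeC1Map p l F) := by
  ext w
  simp only [codeC1, codeC1Map, Set.mem_ofPred_eq, AddMonoidHom.coe_mk, ZeroHom.coe_mk,
    Set.mem_range, eq_comm, funext_iff, Prod.exists]

theorem stmt_0_general (p m l : ℕ) [Fact p.Prime] (hodd : Odd p) (hm : 3 ≤ m)
    (hml : Nat.gcd m l = 1) (F : Type) [Field F] [Fintype F] [Algebra (ZMod p) F]
    (hF : Fintype.card F = p ^ m) :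
    Function.Injective (fun t : F × F × F × ZMod p => fun x : F =>
      Algebra.trace (ZMod p) F (t.1 * x ^ (p ^ l + 1) + t.2.1 * x ^ 2 + t.2.2.1 * x) + t.2.2.2)
    ∧ Nat.card (codeC1 p l F) = p ^ (3 * m + 1) := by
  have hinj : Function.Injective (codeC1Map p l F) := by
    refine (injective_iff_map_eq_zero _).2 fun ⟨a, b, c, h⟩ hw => ?_
    have hh : h = 0 := by simpa [codeC1Map] using congrFun hw 0
    obtain ⟨rfl, rfl, rfl⟩ :=
      eq_zero_of_forall_trace_eq_zero (hodd.ne_two_of_dvd_nat dvd_rfl) hm hml hF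
      (fun x => by simpa [codeC1Map, hh] using congrFun hw x)
    rw [hh]; rfl
  refine ⟨hinj, ?_⟩
  rw [codeC1_eq_range, Nat.card_range_of_injective hinj]
  simp only [Nat.card_eq_fintype_card, Fintype.card_prod, hF, ZMod.card]
  ring

theorem stmt_0 (p m l : ℕ) [Fact p.Prime] (hodd : Odd p) (hm : 3 ≤ m) (hl : 1 ≤ l)
    (hml : Nat.gcd m l = 1) (F : Type) [Field F] [Fintype F] [Algebra (ZMod p) F]
    (hF : Fintype.card F = p ^ m) :
    Function.Injective (fun t : F × F × F × ZMod p => fun x : F =>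
      Algebra.trace (ZMod p) F (t.1 * x ^ (p ^ l + 1) + t.2.1 * x ^ 2 + t.2.2.1 * x) + t.2.2.2)
    ∧ Nat.card (codeC1 p l F) = p ^ (3 * m + 1) :=
  stmt_0_general p m l hodd hm hml F hF
end

section
/- The linear code C̄₂ contains exactly p^{2m+1} codewords; equivalently, the F_p-linear parametrization map sending (a, b, h) ∈ F_q × F_q × F_p to the word (Tr(a·x^{p^l+1} + b·x) + h)_{x ∈ F_q} is injective, so C̄₂ has dimension 2m+1 over F_p. -/
/-!
Write `σ x = x ^ p ^ l`, a field automorphism of `F` over `𝔽_p`. If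
`Tr(a σ(x) x + b x) + h` vanishes for all `x`, then `h = 0` (take `x = 0`), and polarizing the
quadratic part gives `Tr(a σ(x) y + a x σ(y)) = 0`. Moving `σ` across the trace and using
nondegeneracy of the trace form, `σ(a) σ²(x) + a x = 0` for all `x`; at `x = 1` this says
`σ(a) = -a`, so `a ≠ 0` would force `σ² = 1`, i.e. `m ∣ 2l`, impossible since `gcd(m, l) = 1` and
`m ≥ 3`. Then `a = 0` and nondegeneracy gives `b = 0`. Injectivity of the parametrization then
counts the code.
-/

def codeC2 (p l : ℕ) (F : Type) [Field F] [Fintype F] [Algebra (ZMod p) F] :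
    Set (F → ZMod p) :=
  {w | ∃ a b : F, ∃ h : ZMod p, ∀ x : F,
    w x = Algebra.trace (ZMod p) F (a * x ^ (p ^ l + 1) + b * x) + h}

section TraceQuadratic

variable {K L : Type*} [Field K] [Field L] [Algebra K L] [FiniteDimensional K L]
  [Algebra.IsSeparable K L]

theorem eq_zero_of_forall_trace_mul_eq_zero {x : L} (h : ∀ y, Algebra.trace K L (x * y) = 0) :
    x = 0 :=
  (traceForm_nondegenerate K L).1 x h

theorem eq_zero_of_forall_trace_quadratic_add_eq_zero (σ : L ≃ₐ[K] L) (hσ : σ * σ ≠ 1)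
    {a b : L} {c : K} (H : ∀ x, Algebra.trace K L (a * (σ x * x) + b * x) + c = 0) :
    a = 0 ∧ b = 0 ∧ c = 0 := by
  have hc : c = 0 := by simpa using H 0
  simp only [hc, add_zero] at H
  have hpolar : ∀ x y,
      Algebra.trace K L (a * (σ x * y)) + Algebra.trace K L (a * (x * σ y)) = 0 := by
    intro x y
    have hxy : Algebra.trace K L (a * (σ (x + y) * (x + y)) + b * (x + y)) =
        Algebra.trace K L (a * (σ x * x) + b * x) + Algebra.trace K L (a * (σ y * y) + b * y) +
          (Algebra.trace K L (a * (σ x * y)) + Algebra.trace K L (a * (x * σ y))) := by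
      rw [← map_add, ← map_add, ← map_add, map_add σ]
      ring_nf
    rwa [H, H, H, zero_add, zero_add, eq_comm] at hxy
  have hadj : ∀ x, σ a * σ (σ x) + a * x = 0 := by
    refine fun x ↦ eq_zero_of_forall_trace_mul_eq_zero (K := K) fun y ↦ ?_
    obtain ⟨z, rfl⟩ := σ.surjective y
    rw [← hpolar x z, add_mul, map_add, ← Algebra.trace_eq_of_algEquiv σ (a * (σ x * z))]
    simp only [map_mul, mul_assoc]
  have ha : a = 0 := by
    by_contra ha
    have hσa : σ a = -a := by simpa [add_eq_zero_iff_eq_neg] using hadj 1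
    refine hσ (AlgEquiv.ext fun x ↦ ?_)
    have hx := hadj x
    rw [hσa, neg_mul, neg_add_eq_zero] at hx
    exact mul_left_cancel₀ ha hx
  refine ⟨ha, eq_zero_of_forall_trace_mul_eq_zero (K := K) fun x ↦ ?_, hc⟩
  simpa [ha] using H x

theorem injective_trace_quadratic_add (σ : L ≃ₐ[K] L) (hσ : σ * σ ≠ 1) :
    Function.Injective fun t : L × L × K ↦ fun x ↦
      Algebra.trace K L (t.1 * (σ x * x) + t.2.1 * x) + t.2.2 := by
  rintro ⟨a₁, b₁, c₁⟩ ⟨a₂, b₂, c₂⟩ h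
  obtain ⟨ha, hb, hc⟩ := eq_zero_of_forall_trace_quadratic_add_eq_zero σ hσ
    (a := a₁ - a₂) (b := b₁ - b₂) (c := c₁ - c₂) fun x ↦ by
      rw [sub_mul, sub_mul, sub_add_sub_comm, map_sub]
      linear_combination congrFun h x
  rw [sub_eq_zero] at ha hb hc
  rw [ha, hb, hc]

end TraceQuadratic

namespace FiniteField

variable (K L : Type*) [Field K] [Fintype K] [Field L] [Algebra K L] [Finite L]

theorem frobeniusAlgEquivOfAlgebraic_pow_mul_self_ne_one {l : ℕ}
    (h : ¬ Module.finrank K L ∣ 2 * l) :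
    frobeniusAlgEquivOfAlgebraic K L ^ l * frobeniusAlgEquivOfAlgebraic K L ^ l ≠ 1 := by
  rwa [← pow_add, ← two_mul, Ne, ← orderOf_dvd_iff_pow_eq_one,
    orderOf_frobeniusAlgEquivOfAlgebraic]

end FiniteField

theorem codeC2_eq_range (p l : ℕ) (F : Type) [Field F] [Fintype F] [Algebra (ZMod p) F] :
    codeC2 p l F = Set.range fun t : F × F × ZMod p ↦ fun x : F ↦
      Algebra.trace (ZMod p) F (t.1 * x ^ (p ^ l + 1) + t.2.1 * x) + t.2.2 := by
  ext w
  simp [codeC2, funext_iff, eq_comm]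

theorem stmt_3_general (p m l : ℕ) [Fact p.Prime] (hm : 3 ≤ m)
    (hml : Nat.gcd m l = 1) (F : Type) [Field F] [Fintype F] [Algebra (ZMod p) F]
    (hF : Fintype.card F = p ^ m) :
    Function.Injective (fun t : F × F × ZMod p => fun x : F =>
      Algebra.trace (ZMod p) F (t.1 * x ^ (p ^ l + 1) + t.2.1 * x) + t.2.2)
    ∧ Nat.card (codeC2 p l F) = p ^ (2 * m + 1) := by
  set σ := FiniteField.frobeniusAlgEquivOfAlgebraic (ZMod p) F ^ l
  have hrank : Module.finrank (ZMod p) F = m := by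
    refine Nat.pow_right_injective (Fact.out : p.Prime).two_le ?_
    dsimp only
    rw [← hF, Module.card_eq_pow_finrank (K := ZMod p), ZMod.card]
  have hσσ : σ * σ ≠ 1 := by
    refine FiniteField.frobeniusAlgEquivOfAlgebraic_pow_mul_self_ne_one _ _ fun hdvd ↦ ?_
    have := Nat.le_of_dvd two_pos (Nat.Coprime.dvd_of_dvd_mul_right hml (hrank ▸ hdvd))
    omega
  have hσ : ∀ x : F, x ^ (p ^ l + 1) = σ x * x := fun x ↦ by
    rw [pow_succ, AlgEquiv.coe_pow, FiniteField.coe_frobeniusAlgEquivOfAlgebraic_iterate,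
      ZMod.card]
  have hinj := injective_trace_quadratic_add σ hσσ
  simp_rw [← hσ] at hinj
  refine ⟨hinj, ?_⟩
  rw [codeC2_eq_range, Nat.card_range_of_injective hinj, Nat.card_prod, Nat.card_prod,
    Nat.card_zmod, Nat.card_eq_fintype_card, hF]
  ring

theorem stmt_3 (p m l : ℕ) [Fact p.Prime] (hodd : Odd p) (hm : 3 ≤ m) (hl : 1 ≤ l)
    (hml : Nat.gcd m l = 1) (F : Type) [Field F] [Fintype F] [Algebra (ZMod p) F]
    (hF : Fintype.card F = p ^ m) :
    Function.Injective (fun t : F × F × ZMod p => fun x : F =>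
      Algebra.trace (ZMod p) F (t.1 * x ^ (p ^ l + 1) + t.2.1 * x) + t.2.2)
    ∧ Nat.card (codeC2 p l F) = p ^ (2 * m + 1) :=
  stmt_3_general p m l hm hml F hF
end

section
/- The code C̄₁ is affine-invariant: for every u ∈ F_q with u ≠ 0, every v ∈ F_q, and every codeword (c_x)_{x ∈ F_q} of C̄₁, the word (c_{u·x + v})_{x ∈ F_q} obtained by permuting coordinates via the affine map x ↦ u·x + v is again a codeword of C̄₁. -/
namespace FiniteField

variable {K L : Type*} [Field K] [Fintype K] [Field L] [Algebra K L] [Finite L]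

theorem trace_pow_card_pow (y : L) (n : ℕ) :
    Algebra.trace K L (y ^ Fintype.card K ^ n) = Algebra.trace K L y := by
  have h := Algebra.trace_eq_of_algEquiv (frobeniusAlgEquivOfAlgebraic K L ^ n) y
  rwa [AlgEquiv.coe_pow, coe_frobeniusAlgEquivOfAlgebraic, pow_iterate] at h

theorem exists_trace_mul_pow_card_pow_eq (e : L) (n : ℕ) :
    ∃ d : L, ∀ x : L,
      Algebra.trace K L (e * x ^ Fintype.card K ^ n) = Algebra.trace K L (d * x) := by
  obtain ⟨d, rfl⟩ := (frobeniusAlgEquivOfAlgebraic K L ^ n).surjective e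
  refine ⟨d, fun x => ?_⟩
  rw [AlgEquiv.coe_pow, coe_frobeniusAlgEquivOfAlgebraic, pow_iterate, ← mul_pow,
    trace_pow_card_pow]

end FiniteField

theorem trinomial_comp_affine_of_expChar {R : Type*} [CommRing R] (p : ℕ) [ExpChar R p]
    (l : ℕ) (a b c u v x : R) :
    a * (u * x + v) ^ (p ^ l + 1) + b * (u * x + v) ^ 2 + c * (u * x + v) =
      (a * u ^ (p ^ l + 1) * x ^ (p ^ l + 1) + b * u ^ 2 * x ^ 2
        + (c * u + 2 * b * u * v + a * u * v ^ p ^ l) * x)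
      + a * u ^ p ^ l * v * x ^ p ^ l + (a * v ^ (p ^ l + 1) + b * v ^ 2 + c * v) := by
  rw [pow_succ, add_pow_expChar_pow, mul_pow]
  ring

theorem stmt_6_general (p l : ℕ) [Fact p.Prime] (F : Type) [Field F] [Fintype F] [Algebra (ZMod p) F] :
    ∀ u v : F, u ≠ 0 → ∀ c ∈ codeC1 p l F, (fun x : F => c (u * x + v)) ∈ codeC1 p l F := by
  have : CharP F p := charP_of_injective_algebraMap (algebraMap (ZMod p) F).injective p
  have : ExpChar F p := .prime Fact.out
  rintro u v - w ⟨a, b, c, h, hw⟩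
  obtain ⟨d, hd⟩ :=
    FiniteField.exists_trace_mul_pow_card_pow_eq (K := ZMod p) (a * u ^ p ^ l * v) l
  rw [ZMod.card] at hd
  refine ⟨a * u ^ (p ^ l + 1), b * u ^ 2, c * u + 2 * b * u * v + a * u * v ^ p ^ l + d,
    h + Algebra.trace (ZMod p) F (a * v ^ (p ^ l + 1) + b * v ^ 2 + c * v), fun x => ?_⟩
  simp only [hw, trinomial_comp_affine_of_expChar p, add_mul _ d, map_add, hd]
  ring

theorem stmt_6 (p m l : ℕ) [Fact p.Prime] (hodd : Odd p) (hm : 3 ≤ m) (hl : 1 ≤ l)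
    (hml : Nat.gcd m l = 1) (F : Type) [Field F] [Fintype F] [Algebra (ZMod p) F]
    (hF : Fintype.card F = p ^ m) :
    ∀ u v : F, u ≠ 0 → ∀ c ∈ codeC1 p l F, (fun x : F => c (u * x + v)) ∈ codeC1 p l F :=
  stmt_6_general p l F
end

section
/- For every integer i > 0 such that C̄₁ has at least one codeword of Hamming weight i, there exists a positive integer λ such that the pair (F_q, B_i) is a 2-(p^m, i, λ) design, where B_i is the set of supports of the codewords of C̄₁ of Hamming weight i; that is, every 2-element subset of F_q is contained in exactly λ members of B_i. -/
def hwt {n : ℕ} {F : Type} [Fintype F] (c : F → ZMod n) : ℕ :=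
  (Finset.univ.filter fun x => c x ≠ 0).card

def suppF {n : ℕ} {F : Type} [Fintype F] (c : F → ZMod n) : Finset F :=
  Finset.univ.filter fun x => c x ≠ 0

def blocks1 (p l : ℕ) (F : Type) [Field F] [Fintype F] [Algebra (ZMod p) F] (i : ℕ) :
    Set (Finset F) :=
  {S | ∃ c ∈ codeC1 p l F, hwt c = i ∧ suppF c = S}

/-!
The code is invariant under the affine permutations `x ↦ v * x + u` (`v ≠ 0`) of its coordinates:
expanding `a (v x + u) ^ (p ^ l + 1)` produces, besides terms of the allowed shapes,
`a v ^ (p ^ l) u x ^ (p ^ l)`, whose trace is that of the linear term `t x` with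
`t ^ (p ^ l) = a v ^ (p ^ l) u`, since the trace is Frobenius-invariant. The affine group is
transitive on pairs of points, so the number of weight-`i` supports through a pair does not depend
on the pair, and it is positive once `i ≥ 2`. Weight `1` does not occur because every codeword sums
to `0`: `∑ x, x ^ k = 0` for `0 < k < q - 1`, and `x ^ (p ^ l + 1) = x ^ (p ^ (l % m) + 1)`.
-/

section SupportBlocks

variable {n : ℕ} {F : Type} [Fintype F]

-- `blocks1 p l F i` is `supportBlocks (codeC1 p l F) i` by definition.
def supportBlocks (C : Set (F → ZMod n)) (i : ℕ) : Set (Finset F) :=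
  {S | ∃ c ∈ C, hwt c = i ∧ suppF c = S}

lemma hwt_eq_card_suppF (c : F → ZMod n) : hwt c = (suppF c).card := rfl

lemma suppF_comp_equiv (c : F → ZMod n) (e : F ≃ F) :
    suppF (c ∘ e) = (suppF c).map e.symm.toEmbedding := by
  ext x
  simp [suppF, Finset.mem_map_equiv]

lemma hwt_ne_one_of_sum_eq_zero {c : F → ZMod n} (hc : ∑ x, c x = 0) : hwt c ≠ 1 := by
  intro h
  obtain ⟨x₀, hx₀⟩ := Finset.card_eq_one.mp h
  have hsum : ∑ x, c x = c x₀ := by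
    rw [← Finset.sum_filter_ne_zero, hx₀, Finset.sum_singleton]
  have hx₀_mem : x₀ ∈ suppF c := by rw [suppF, hx₀]; exact Finset.mem_singleton_self x₀
  exact (Finset.mem_filter.mp hx₀_mem).2 (hsum ▸ hc)

variable {C : Set (F → ZMod n)} {i : ℕ}

lemma map_mem_supportBlocks {e : F ≃ F} (he : ∀ c ∈ C, c ∘ e.symm ∈ C) {S : Finset F}
    (hS : S ∈ supportBlocks C i) : S.map e.toEmbedding ∈ supportBlocks C i := by
  obtain ⟨c, hc, rfl, rfl⟩ := hS
  refine ⟨c ∘ e.symm, he c hc, ?_, ?_⟩ <;>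
    simp only [hwt_eq_card_suppF, suppF_comp_equiv, Equiv.symm_symm, Finset.card_map]

lemma card_superset_map_eq {e : F ≃ F} (he : ∀ c ∈ C, c ∘ e ∈ C)
    (he' : ∀ c ∈ C, c ∘ e.symm ∈ C) (T : Finset F) :
    Nat.card {S : Finset F // S ∈ supportBlocks C i ∧ T ⊆ S}
      = Nat.card {S : Finset F // S ∈ supportBlocks C i ∧ T.map e.toEmbedding ⊆ S} := by
  refine Nat.card_congr (Equiv.subtypeEquiv e.finsetCongr fun S => ?_)
  rw [Equiv.finsetCongr_apply, Finset.map_subset_map]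
  refine and_congr_left fun _ => ⟨map_mem_supportBlocks he', fun hS => ?_⟩
  simpa [Finset.map_map] using map_mem_supportBlocks (e := e.symm) he hS

end SupportBlocks

section AffineInvariance

variable {F : Type} [Field F]

def affinePerm (v u : F) (hv : v ≠ 0) : F ≃ F :=
  (Equiv.mulLeft₀ v hv).trans (Equiv.addRight u)

lemma affinePerm_apply (v u : F) (hv : v ≠ 0) (x : F) : affinePerm v u hv x = v * x + u := rfl

lemma affinePerm_symm_apply (v u : F) (hv : v ≠ 0) (x : F) :
    (affinePerm v u hv).symm x = v⁻¹ * x + -(v⁻¹ * u) := by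
  rw [Equiv.symm_apply_eq, affinePerm_apply]
  field_simp
  ring

lemma exists_affinePerm_map_eq {T T' : Finset F} (hT : T.card = 2) (hT' : T'.card = 2) :
    ∃ (v u : F) (hv : v ≠ 0), T.map (affinePerm v u hv).toEmbedding = T' := by
  classical
  obtain ⟨x₁, x₂, hx, rfl⟩ := Finset.card_eq_two.mp hT
  obtain ⟨y₁, y₂, hy, rfl⟩ := Finset.card_eq_two.mp hT'
  have hx' : x₁ - x₂ ≠ 0 := sub_ne_zero.mpr hx
  refine ⟨(y₁ - y₂) / (x₁ - x₂), y₁ - (y₁ - y₂) / (x₁ - x₂) * x₁,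
    div_ne_zero (sub_ne_zero.mpr hy) hx', ?_⟩
  simp only [Finset.map_insert, Finset.map_singleton, Equiv.coe_toEmbedding, affinePerm_apply]
  congr 2
  · ring
  · field_simp
    ring

variable [Fintype F] {n : ℕ} {C : Set (F → ZMod n)}

theorem exists_card_superset_eq_of_affine_invariant
    (hC : ∀ c ∈ C, ∀ v u : F, v ≠ 0 → (fun x => c (v * x + u)) ∈ C) {i : ℕ} (hi : 2 ≤ i)
    (hc : ∃ c ∈ C, hwt c = i) :
    ∃ lam : ℕ, 0 < lam ∧ ∀ T : Finset F, T.card = 2 →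
      Nat.card {S : Finset F // S ∈ supportBlocks C i ∧ T ⊆ S} = lam := by
  obtain ⟨c, hc, hci⟩ := hc
  obtain ⟨T₀, hT₀c, hT₀⟩ := Finset.exists_subset_card_eq (hi.trans_eq hci.symm)
  refine ⟨Nat.card {S : Finset F // S ∈ supportBlocks C i ∧ T₀ ⊆ S}, ?_, fun T hT => ?_⟩
  · have : Nonempty {S : Finset F // S ∈ supportBlocks C i ∧ T₀ ⊆ S} :=
      ⟨⟨suppF c, ⟨c, hc, hci, rfl⟩, hT₀c⟩⟩
    exact Nat.card_pos
  · obtain ⟨v, u, hv, hTT₀⟩ := exists_affinePerm_map_eq hT hT₀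
    rw [← hTT₀]
    refine card_superset_map_eq (e := affinePerm v u hv) (fun c hc => hC c hc v u hv)
      (fun c hc => ?_) T
    simpa only [Function.comp_def, affinePerm_symm_apply] using
      hC c hc v⁻¹ (-(v⁻¹ * u)) (inv_ne_zero hv)

end AffineInvariance

section FiniteField

variable (K : Type*) {L : Type*} [Field K] [Fintype K] [Field L] [Finite L] [Algebra K L]

lemma trace_pow_card_pow (k : ℕ) (y : L) :
    Algebra.trace K L (y ^ Fintype.card K ^ k) = Algebra.trace K L y := by
  have h := Algebra.trace_eq_of_algEquiv (FiniteField.frobeniusAlgEquivOfAlgebraic K L ^ k) y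
  rwa [AlgEquiv.coe_pow, FiniteField.coe_frobeniusAlgEquivOfAlgebraic_iterate] at h

lemma exists_pow_card_pow_eq (k : ℕ) (s : L) : ∃ t : L, t ^ Fintype.card K ^ k = s := by
  obtain ⟨t, ht⟩ := (FiniteField.frobeniusAlgEquivOfAlgebraic K L ^ k).surjective s
  refine ⟨t, ?_⟩
  rwa [AlgEquiv.coe_pow, FiniteField.coe_frobeniusAlgEquivOfAlgebraic_iterate] at ht

end FiniteField

section PowerSums

variable {p m : ℕ} {F : Type*} [Field F] [Fintype F]

lemma pow_prime_pow_mod (hF : Fintype.card F = p ^ m) (l : ℕ) (x : F) :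
    x ^ p ^ (l % m) = x ^ p ^ l := by
  conv_rhs => rw [← Nat.div_add_mod l m, pow_add, pow_mul, pow_mul, ← hF,
    FiniteField.pow_card_pow]

lemma sum_pow_eq_zero_of_le_pow_add_one (hF : Fintype.card F = p ^ m) (hm : 3 ≤ m) {r k : ℕ} (hr : r < m)
    (hk : k ≤ p ^ r + 1) : ∑ x : F, x ^ k = 0 := by
  have hp : 2 ≤ p := (Nat.one_lt_pow_iff (by omega)).mp (hF ▸ Fintype.one_lt_card)
  have hlarge : 4 ≤ p ^ (m - 1) :=
    (Nat.pow_le_pow_left hp 2).trans (Nat.pow_le_pow_right (by omega) (by omega))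
  have hq : p ^ m = p * p ^ (m - 1) := by rw [← pow_succ']; congr 1; omega
  have : 2 * p ^ (m - 1) ≤ p * p ^ (m - 1) := Nat.mul_le_mul_right _ hp
  have : p ^ r ≤ p ^ (m - 1) := Nat.pow_le_pow_right (by omega) (by omega)
  refine FiniteField.sum_pow_lt_card_sub_one (K := F) k ?_
  rw [hF, hq]
  omega

lemma sum_pow_prime_pow_add_one_eq_zero (hF : Fintype.card F = p ^ m) (hm : 3 ≤ m) (l : ℕ) :
    ∑ x : F, x ^ (p ^ l + 1) = 0 := by
  simp only [pow_succ _ (p ^ l), ← pow_prime_pow_mod hF l, ← pow_succ]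
  exact sum_pow_eq_zero_of_le_pow_add_one hF hm (Nat.mod_lt l (by omega)) le_rfl

end PowerSums

section CodeC1

variable {p : ℕ} [Fact p.Prime] {F : Type} [Field F] [Fintype F] [Algebra (ZMod p) F]

lemma codeC1_comp_affine {l : ℕ} {w : F → ZMod p} (hw : w ∈ codeC1 p l F) (v u : F) :
    (fun x => w (v * x + u)) ∈ codeC1 p l F := by
  obtain ⟨a, b, c, h, hw⟩ := hw
  have : CharP F p := charP_of_injective_algebraMap (algebraMap (ZMod p) F).injective p
  have htr (y : F) : Algebra.trace (ZMod p) F (y ^ p ^ l) = Algebra.trace (ZMod p) F y := by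
    simpa only [ZMod.card] using trace_pow_card_pow (ZMod p) l y
  obtain ⟨t, ht⟩ := exists_pow_card_pow_eq (ZMod p) l (a * v ^ p ^ l * u)
  rw [ZMod.card] at ht
  refine ⟨a * v ^ (p ^ l + 1), b * v ^ 2, a * u ^ p ^ l * v + 2 * b * u * v + c * v + t,
    h + Algebra.trace (ZMod p) F (a * u ^ (p ^ l + 1) + b * u ^ 2 + c * u), fun x => ?_⟩
  have hexpand : a * (v * x + u) ^ (p ^ l + 1) + b * (v * x + u) ^ 2 + c * (v * x + u)
      = (a * v ^ (p ^ l + 1) * x ^ (p ^ l + 1) + b * v ^ 2 * x ^ 2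
          + (a * u ^ p ^ l * v + 2 * b * u * v + c * v + t) * x)
        + ((t * x) ^ p ^ l - t * x) + (a * u ^ (p ^ l + 1) + b * u ^ 2 + c * u) := by
    simp only [pow_succ _ (p ^ l), add_pow_char_pow, mul_pow, ht]
    ring
  show w (v * x + u) = _
  rw [hw, hexpand, map_add, map_add, map_sub, htr, sub_self]
  ring

lemma sum_eq_zero_of_mem_codeC1 {m l : ℕ} (hF : Fintype.card F = p ^ m) (hm : 3 ≤ m)
    {w : F → ZMod p} (hw : w ∈ codeC1 p l F) : ∑ x, w x = 0 := by
  obtain ⟨a, b, c, h, hw⟩ := hw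
  have hsum_const : ∑ _x : F, h = 0 := by
    simp [hF, zero_pow (by omega : m ≠ 0)]
  have hsum_pow (k : ℕ) (hk : k ≤ 2) : ∑ x : F, x ^ k = 0 :=
    sum_pow_eq_zero_of_le_pow_add_one hF hm (r := 0) (by omega) (by simpa using hk)
  have hsum_lin : ∑ x : F, x = 0 := by simpa using hsum_pow 1 (by norm_num)
  have hinner : ∑ x : F, (a * x ^ (p ^ l + 1) + b * x ^ 2 + c * x) = 0 := by
    rw [Finset.sum_add_distrib, Finset.sum_add_distrib, ← Finset.mul_sum, ← Finset.mul_sum,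
      ← Finset.mul_sum, sum_pow_prime_pow_add_one_eq_zero hF hm, hsum_pow 2 le_rfl, hsum_lin]
    ring
  simp only [hw, Finset.sum_add_distrib, ← map_sum, hinner, map_zero, hsum_const, add_zero]

end CodeC1

theorem stmt_8_general (p m l : ℕ) [Fact p.Prime] (hm : 3 ≤ m) (F : Type) [Field F] [Fintype F]
    [Algebra (ZMod p) F] (hF : Fintype.card F = p ^ m) :
    ∀ i : ℕ, 0 < i → (∃ c ∈ codeC1 p l F, hwt c = i) →
      ∃ lam : ℕ, 0 < lam ∧ ∀ T : Finset F, T.card = 2 →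
        Nat.card {S : Finset F // S ∈ blocks1 p l F i ∧ T ⊆ S} = lam := by
  rintro i hi ⟨c, hc, rfl⟩
  have hc_ne_one : hwt c ≠ 1 := hwt_ne_one_of_sum_eq_zero (sum_eq_zero_of_mem_codeC1 hF hm hc)
  exact exists_card_superset_eq_of_affine_invariant
    (fun w hw v u _ => codeC1_comp_affine hw v u) (by omega) ⟨c, hc, rfl⟩

theorem stmt_8 (p m l : ℕ) [Fact p.Prime] (hodd : Odd p) (hm : 3 ≤ m) (hl : 1 ≤ l)
    (hml : Nat.gcd m l = 1) (F : Type) [Field F] [Fintype F] [Algebra (ZMod p) F]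
    (hF : Fintype.card F = p ^ m) :
    ∀ i : ℕ, 0 < i → (∃ c ∈ codeC1 p l F, hwt c = i) →
      ∃ lam : ℕ, 0 < lam ∧ ∀ T : Finset F, T.card = 2 →
        Nat.card {S : Finset F // S ∈ blocks1 p l F i ∧ T ⊆ S} = lam :=
  stmt_8_general p m l hm F hF
end

section
/- For every integer i > 0 such that C̄₂ has at least one codeword of Hamming weight i, there exists a positive integer λ such that the pair (F_q, B_i) is a 2-(p^m, i, λ) design, where B_i is the set of supports of the codewords of C̄₂ of Hamming weight i; that is, every 2-element subset of F_q is contained in exactly λ members of B_i. -/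
def blocks2 (p l : ℕ) (F : Type) [Field F] [Fintype F] [Algebra (ZMod p) F] (i : ℕ) :
    Set (Finset F) :=
  {S | ∃ c ∈ codeC2 p l F, hwt c = i ∧ suppF c = S}

lemma trace_pow_char {p : ℕ} [Fact p.Prime] {F : Type} [Field F] [Fintype F]
    [Algebra (ZMod p) F] (y : F) :
    Algebra.trace (ZMod p) F (y ^ p) = Algebra.trace (ZMod p) F y := by
  haveI : CharP F p := charP_of_injective_algebraMap (algebraMap (ZMod p) F).injective p
  haveI : PerfectRing F p := by infer_instance
  let e : F ≃ₐ[ZMod p] F :=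
    AlgEquiv.ofRingEquiv (f := frobeniusEquiv F p) (fun c => by
      simp [frobeniusEquiv_apply, frobenius_def, ← map_pow, ZMod.pow_card])
  have := Algebra.trace_eq_of_algEquiv e y
  simpa [e, frobeniusEquiv_apply, frobenius_def] using this

lemma trace_pow_char_pow {p : ℕ} [Fact p.Prime] {F : Type} [Field F] [Fintype F]
    [Algebra (ZMod p) F] (n : ℕ) (y : F) :
    Algebra.trace (ZMod p) F (y ^ p ^ n) = Algebra.trace (ZMod p) F y := by
  induction n with
  | zero => simp
  | succ n ih => rw [pow_succ, pow_mul, trace_pow_char, ih]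

lemma trace_frob_linear {p m l : ℕ} [Fact p.Prime] {F : Type} [Field F] [Fintype F]
    [Algebra (ZMod p) F] (hF : Fintype.card F = p ^ m) (hm : 1 ≤ m) (c x : F) :
    Algebra.trace (ZMod p) F (c * x ^ p ^ l)
      = Algebra.trace (ZMod p) F (c ^ p ^ (m * l - l) * x) := by
  have hle : l ≤ m * l := Nat.le_mul_of_pos_left l hm
  have key : (c ^ p ^ (m * l - l) * x) ^ p ^ l = c * x ^ p ^ l := by
    rw [mul_pow, ← pow_mul, ← pow_add, Nat.sub_add_cancel hle, pow_mul, ← hF,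
      FiniteField.pow_card_pow]
  rw [← key, trace_pow_char_pow]

lemma code_affine {p m l : ℕ} [Fact p.Prime] {F : Type} [Field F] [Fintype F]
    [Algebra (ZMod p) F] (hF : Fintype.card F = p ^ m) (hm : 1 ≤ m) (s t : F)
    {w : F → ZMod p} (hw : w ∈ codeC2 p l F) :
    (fun x => w (s * x + t)) ∈ codeC2 p l F := by
  haveI : CharP F p := charP_of_injective_algebraMap (algebraMap (ZMod p) F).injective p
  obtain ⟨a, b, h, hab⟩ := hw
  refine ⟨a * s ^ (p ^ l + 1),
    a * s * t ^ p ^ l + b * s + (a * s ^ p ^ l * t) ^ p ^ (m * l - l),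
    h + Algebra.trace (ZMod p) F (a * t ^ (p ^ l + 1) + b * t), fun x => ?_⟩
  simp only [hab]
  have hfr : (s * x + t) ^ p ^ l = s ^ p ^ l * x ^ p ^ l + t ^ p ^ l := by
    rw [add_pow_char_pow, mul_pow]
  have key : a * (s * x + t) ^ (p ^ l + 1) + b * (s * x + t)
      = (a * s ^ (p ^ l + 1) * x ^ (p ^ l + 1) + (a * s * t ^ p ^ l + b * s) * x)
        + (a * s ^ p ^ l * t) * x ^ p ^ l
        + (a * t ^ (p ^ l + 1) + b * t) := by
    rw [pow_succ (s * x + t), hfr]; ring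
  have key2 : a * s ^ (p ^ l + 1) * x ^ (p ^ l + 1)
        + (a * s * t ^ p ^ l + b * s + (a * s ^ p ^ l * t) ^ p ^ (m * l - l)) * x
      = (a * s ^ (p ^ l + 1) * x ^ (p ^ l + 1) + (a * s * t ^ p ^ l + b * s) * x)
        + (a * s ^ p ^ l * t) ^ p ^ (m * l - l) * x := by ring
  rw [key, map_add, map_add, trace_frob_linear hF hm, key2]
  simp only [map_add]
  ring

lemma suppF_comp {n : ℕ} {F : Type} [Fintype F] [DecidableEq F] (g : F ≃ F) (c : F → ZMod n) :
    suppF (fun x => c (g x)) = (suppF c).image g.symm := by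
  ext x
  simp only [suppF, Finset.mem_filter, Finset.mem_univ, true_and, Finset.mem_image]
  constructor
  · intro hx; exact ⟨g x, hx, g.symm_apply_apply x⟩
  · rintro ⟨y, hy, rfl⟩; simpa using hy

lemma hwt_comp {n : ℕ} {F : Type} [Fintype F] (g : F ≃ F) (c : F → ZMod n) :
    hwt (fun x => c (g x)) = hwt c := by
  classical
  show (suppF _).card = (suppF c).card
  rw [suppF_comp, Finset.card_image_of_injective _ g.symm.injective]

def affEquiv {F : Type} [Field F] (s t : F) (hs : s ≠ 0) : F ≃ F where
  toFun x := s * x + t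
  invFun x := s⁻¹ * (x - t)
  left_inv x := by
    show s⁻¹ * (s * x + t - t) = x
    rw [add_sub_cancel_right, ← mul_assoc, inv_mul_cancel₀ hs, one_mul]
  right_inv x := by
    show s * (s⁻¹ * (x - t)) + t = x
    rw [← mul_assoc, mul_inv_cancel₀ hs, one_mul, sub_add_cancel]

lemma blocks_affine {p m l i : ℕ} [Fact p.Prime] {F : Type} [Field F] [Fintype F]
    [DecidableEq F] [Algebra (ZMod p) F] (hF : Fintype.card F = p ^ m) (hm : 1 ≤ m)
    (s t : F) (hs : s ≠ 0) {S : Finset F} (hS : S ∈ blocks2 p l F i) :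
    S.image (affEquiv s t hs) ∈ blocks2 p l F i := by
  obtain ⟨c, hc, hci, hcs⟩ := hS
  refine ⟨fun x => c ((affEquiv s t hs).symm x), ?_, ?_, ?_⟩
  · have : ∀ x, c ((affEquiv s t hs).symm x) = c (s⁻¹ * x + -(s⁻¹ * t)) := by
      intro x
      show c (s⁻¹ * (x - t)) = _
      ring_nf
    simp only [this]
    exact code_affine hF hm s⁻¹ (-(s⁻¹ * t)) hc
  · rw [hwt_comp]; exact hci
  · rw [suppF_comp, Equiv.symm_symm, hcs]

lemma count_eq_affine {p m l i : ℕ} [Fact p.Prime] {F : Type} [Field F] [Fintype F]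
    [DecidableEq F] [Algebra (ZMod p) F] (hF : Fintype.card F = p ^ m) (hm : 1 ≤ m)
    (s t : F) (hs : s ≠ 0) (T : Finset F) :
    Nat.card {S : Finset F // S ∈ blocks2 p l F i ∧ T ⊆ S}
      = Nat.card {S : Finset F // S ∈ blocks2 p l F i ∧ T.image (affEquiv s t hs) ⊆ S} := by
  classical
  set g := affEquiv s t hs with hg
  have hsymm : ∀ (u : Finset F), (u.image g).image g.symm = u := by
    intro u; rw [Finset.image_image]; simp
  have hsymm2 : ∀ (u : Finset F), (u.image g.symm).image g = u := by
    intro u; rw [Finset.image_image]; simp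
  have hblocksymm : ∀ {S : Finset F}, S ∈ blocks2 p l F i → S.image g.symm ∈ blocks2 p l F i := by
    intro S hS
    have h2 : ∀ x, g.symm x = affEquiv s⁻¹ (-(s⁻¹ * t)) (inv_ne_zero hs) x := by
      intro x
      show s⁻¹ * (x - t) = s⁻¹ * x + -(s⁻¹ * t)
      ring
    have : S.image g.symm = S.image (affEquiv s⁻¹ (-(s⁻¹ * t)) (inv_ne_zero hs)) :=
      Finset.image_congr fun x _ => h2 x
    rw [this]
    exact blocks_affine hF hm _ _ _ hS
  apply Nat.card_congr
  refine ⟨fun S => ⟨S.1.image g, blocks_affine hF hm s t hs S.2.1,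
      Finset.image_subset_image S.2.2⟩,
    fun S => ⟨S.1.image g.symm, hblocksymm S.2.1, ?_⟩, fun S => ?_, fun S => ?_⟩
  · have := Finset.image_subset_image (f := g.symm) S.2.2
    rwa [hsymm] at this
  · apply Subtype.ext; exact hsymm S.1
  · apply Subtype.ext; exact hsymm2 S.1

lemma no_weight_one {p m l : ℕ} [Fact p.Prime] {F : Type} [Field F] [Fintype F]
    [Algebra (ZMod p) F] (hF : Fintype.card F = p ^ m) (hodd : Odd p) (hm : 3 ≤ m)
    {c : F → ZMod p} (hc : c ∈ codeC2 p l F) (hc1 : hwt c = 1) : False := by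
  classical
  haveI : CharP F p := charP_of_injective_algebraMap (algebraMap (ZMod p) F).injective p
  have hp3 : 3 ≤ p := by
    have h2 := (Fact.out : p.Prime).two_le
    have := Nat.odd_iff.mp hodd
    omega
  have hq27 : 27 ≤ Fintype.card F := by
    rw [hF]
    calc 27 = 3 ^ 3 := by norm_num
    _ ≤ p ^ 3 := Nat.pow_le_pow_left hp3 3
    _ ≤ p ^ m := Nat.pow_le_pow_right (by omega) hm
  obtain ⟨x0, hx0⟩ := Finset.card_eq_one.mp hc1
  have hcx : ∀ x : F, c x ≠ 0 ↔ x = x0 := by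
    intro x
    rw [← Finset.mem_singleton, ← hx0]
    simp [suppF]
  obtain ⟨a, b, h, hab⟩ := hc
  set t : F := 1 with ht
  have ht0 : t ≠ 0 := one_ne_zero
  set b' : F := (a * t) ^ p ^ (m * l - l) + a * t ^ p ^ l with hb'
  set h' : ZMod p := Algebra.trace (ZMod p) F (a * t ^ (p ^ l + 1) + b * t) with hh'
  have dform : ∀ x : F, c (x + t) - c x = Algebra.trace (ZMod p) F (b' * x) + h' := by
    intro x
    rw [hab, hab]
    have hfr : (x + t) ^ p ^ l = x ^ p ^ l + t ^ p ^ l := add_pow_char_pow ..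
    have key : a * (x + t) ^ (p ^ l + 1) + b * (x + t)
        = (a * x ^ (p ^ l + 1) + b * x) + ((a * t) * x ^ p ^ l
          + ((a * t ^ p ^ l) * x + (a * t ^ (p ^ l + 1) + b * t))) := by
      rw [pow_succ (x + t), hfr, pow_succ t]; ring
    rw [key]
    simp only [map_add]
    rw [trace_frob_linear hF (by omega) (a * t) x]
    have : b' * x = (a * t) ^ p ^ (m * l - l) * x + a * t ^ p ^ l * x := by rw [hb']; ring
    rw [this, map_add]
    rw [hh', ht]
    simp only [one_pow, mul_one, map_add]
    ring
  have hdsupp : (Finset.univ.filter fun x : F =>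
      Algebra.trace (ZMod p) F (b' * x) + h' ≠ 0) = {x0 - t, x0} := by
    ext x
    simp only [Finset.mem_filter, Finset.mem_univ, true_and, Finset.mem_insert,
      Finset.mem_singleton, ← dform, sub_ne_zero]
    constructor
    · intro hx
      by_contra hcon
      push_neg at hcon
      obtain ⟨h1, h2⟩ := hcon
      have e1 : c (x + t) = 0 := by
        by_contra he
        have := (hcx _).mp he
        exact h1 (by rw [← this]; ring)
      have e2 : c x = 0 := by
        by_contra he
        exact h2 ((hcx _).mp he)
      rw [e1, e2] at hx
      exact hx rfl
    · rintro (h | h)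
      · rw [h]
        have e1 : c (x0 - t + t) ≠ 0 := by rw [sub_add_cancel]; exact (hcx x0).mpr rfl
        have e2 : c (x0 - t) = 0 := by
          by_contra he
          exact ht0 (sub_eq_self.mp ((hcx _).mp he))
        rw [e2]
        exact e1
      · rw [h]
        have e1 : c (x0 + t) = 0 := by
          by_contra he
          exact ht0 (add_eq_left.mp ((hcx _).mp he))
        rw [e1]
        exact fun hh => (hcx x0).mpr rfl hh.symm
  have hne : x0 - t ≠ x0 := fun he => ht0 (sub_eq_self.mp he)
  have hcard2 : ({x0 - t, x0} : Finset F).card = 2 := Finset.card_pair hne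
  have hZcard : (Finset.univ.filter fun x : F =>
      Algebra.trace (ZMod p) F (b' * x) + h' = 0).card = Fintype.card F - 2 := by
    have hsum := Finset.card_filter_add_card_filter_not
      (s := (Finset.univ : Finset F))
      (p := fun x : F => Algebra.trace (ZMod p) F (b' * x) + h' = 0)
    rw [hdsupp, hcard2] at hsum
    rw [Finset.card_univ] at hsum
    omega
  have hZpos : 0 < Fintype.card F - 2 := by omega
  have hZne : (Finset.univ.filter fun x : F =>
      Algebra.trace (ZMod p) F (b' * x) + h' = 0).Nonempty := by
    rw [← Finset.card_pos, hZcard]; exact hZpos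
  obtain ⟨x1, hx1⟩ := hZne
  have hx1' : Algebra.trace (ZMod p) F (b' * x1) + h' = 0 := (Finset.mem_filter.mp hx1).2
  have hker : ∀ x : F, Algebra.trace (ZMod p) F (b' * (x - x1))
      = Algebra.trace (ZMod p) F (b' * x) + h' := by
    intro x
    rw [mul_sub, map_sub]
    have : Algebra.trace (ZMod p) F (b' * x1) = -h' := by
      rw [← add_eq_zero_iff_eq_neg]; exact hx1'
    rw [this]
    ring
  have hcards : Nat.card {x : F // Algebra.trace (ZMod p) F (b' * x) + h' = 0}
      = Nat.card {x : F // Algebra.trace (ZMod p) F (b' * x) = 0} := by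
    apply Nat.card_congr
    refine ⟨fun x => ⟨x.1 - x1, by rw [hker]; exact x.2⟩,
      fun x => ⟨x.1 + x1, ?_⟩, fun x => ?_, fun x => ?_⟩
    · have := x.2
      have h2 := hker (x.1 + x1)
      rw [add_sub_cancel_right] at h2
      rw [← h2]; exact this
    · apply Subtype.ext; simp
    · apply Subtype.ext; simp
  set φ : F →+ ZMod p := AddMonoidHom.mk' (fun x => Algebra.trace (ZMod p) F (b' * x))
    (fun x y => by show Algebra.trace (ZMod p) F (b' * (x + y)) = _; rw [mul_add, map_add])
    with hφ
  have hkcard : Nat.card {x : F // Algebra.trace (ZMod p) F (b' * x) = 0}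
      = Nat.card φ.ker := by
    apply Nat.card_congr
    exact Equiv.subtypeEquivRight (fun x => by
      simp [AddMonoidHom.mem_ker, hφ])
  have hdvd : Nat.card φ.ker ∣ Nat.card F := AddSubgroup.card_addSubgroup_dvd_card φ.ker
  have hZcard' : Nat.card {x : F // Algebra.trace (ZMod p) F (b' * x) + h' = 0}
      = Fintype.card F - 2 := by
    rw [Nat.card_eq_fintype_card, Fintype.card_subtype]
    exact hZcard
  have hdvd2 : (Fintype.card F - 2) ∣ Fintype.card F := by
    rw [← hZcard', hcards, hkcard, ← Nat.card_eq_fintype_card]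
    exact hdvd
  have hdvd3 : (Fintype.card F - 2) ∣ 2 := by
    have := Nat.dvd_sub hdvd2 (dvd_refl (Fintype.card F - 2))
    have heq : Fintype.card F - (Fintype.card F - 2) = 2 := by omega
    rwa [heq] at this
  have := Nat.le_of_dvd (by norm_num) hdvd3
  omega

theorem stmt_9 (p m l : ℕ) [Fact p.Prime] (hodd : Odd p) (hm : 3 ≤ m) (hl : 1 ≤ l)
    (hml : Nat.gcd m l = 1) (F : Type) [Field F] [Fintype F] [Algebra (ZMod p) F]
    (hF : Fintype.card F = p ^ m) :
    ∀ i : ℕ, 0 < i → (∃ c ∈ codeC2 p l F, hwt c = i) →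
      ∃ lam : ℕ, 0 < lam ∧ ∀ T : Finset F, T.card = 2 →
        Nat.card {S : Finset F // S ∈ blocks2 p l F i ∧ T ⊆ S} = lam := by
  classical
  intro i hi hex
  obtain ⟨c, hc, hci⟩ := hex
  have hm1 : 1 ≤ m := by omega
  have hp3 : 3 ≤ p := by
    have h2 := (Fact.out : p.Prime).two_le
    have := Nat.odd_iff.mp hodd
    omega
  have hq27 : 27 ≤ Fintype.card F := by
    rw [hF]
    calc 27 = 3 ^ 3 := by norm_num
    _ ≤ p ^ 3 := Nat.pow_le_pow_left hp3 3
    _ ≤ p ^ m := Nat.pow_le_pow_right (by omega) hm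
  have hne1 : i ≠ 1 := fun h1 => no_weight_one hF hodd hm hc (by rw [hci, h1])
  have hi2 : 2 ≤ i := by omega
  have huniform : ∀ u v u' v' : F, u ≠ v → u' ≠ v' →
      Nat.card {S : Finset F // S ∈ blocks2 p l F i ∧ ({u, v} : Finset F) ⊆ S}
        = Nat.card {S : Finset F // S ∈ blocks2 p l F i ∧ ({u', v'} : Finset F) ⊆ S} := by
    intro u v u' v' huv huv'
    have hs : (u' - v') / (u - v) ≠ 0 :=
      div_ne_zero (sub_ne_zero.mpr huv') (sub_ne_zero.mpr huv)
    set s := (u' - v') / (u - v) with hsdef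
    set t := u' - s * u with htdef
    have hgu : affEquiv s t hs u = u' := by
      show s * u + t = u'
      rw [htdef]; ring
    have hgv : affEquiv s t hs v = v' := by
      show s * v + t = v'
      have hmul : s * (u - v) = u' - v' := div_mul_cancel₀ _ (sub_ne_zero.mpr huv)
      calc s * v + t = u' - s * (u - v) := by rw [htdef]; ring
      _ = u' - (u' - v') := by rw [hmul]
      _ = v' := by ring
    have hcnt := count_eq_affine (l := l) (i := i) hF hm1 s t hs {u, v}
    rwa [Finset.image_insert, Finset.image_singleton, hgu, hgv] at hcnt
  obtain ⟨u0, v0, huv0⟩ := Fintype.exists_pair_of_one_lt_card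
    (show 1 < Fintype.card F by omega) (α := F)
  refine ⟨Nat.card {S : Finset F // S ∈ blocks2 p l F i ∧ ({u0, v0} : Finset F) ⊆ S}, ?_, ?_⟩
  · have h1 : 1 < (suppF c).card := by
      have : (suppF c).card = i := hci
      omega
    obtain ⟨u, hu, v, hv, huv⟩ := Finset.one_lt_card.mp h1
    have hTsub : ({u, v} : Finset F) ⊆ suppF c := by
      intro x hx
      rcases Finset.mem_insert.mp hx with rfl | hx
      · exact hu
      · rw [Finset.mem_singleton.mp hx]; exact hv
    have hmem : suppF c ∈ blocks2 p l F i := ⟨c, hc, hci, rfl⟩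
    have hpos : 0 < Nat.card {S : Finset F // S ∈ blocks2 p l F i ∧ ({u, v} : Finset F) ⊆ S} := by
      haveI : Nonempty {S : Finset F // S ∈ blocks2 p l F i ∧ ({u, v} : Finset F) ⊆ S} :=
        ⟨⟨suppF c, hmem, hTsub⟩⟩
      exact Nat.card_pos
    rw [huniform u0 v0 u v huv0 huv]
    exact hpos
  · intro T hT
    obtain ⟨u, v, huv, rfl⟩ := Finset.card_eq_two.mp hT
    exact huniform u v u0 v0 huv huv0
end
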